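/- arXiv:1806.02604 — 4 statements merged into one kernel-verified Lean document; each statement's English description precedes it below -/
import Mathlib

section
/- Let p, q be quaternions with p·q̄ + q·p̄ = 0, and let v be a pure quaternion. Set w := p·v·p̄ + p·q̄ − q·p̄. Then w·w̄ = (p·p̄)·(4·q·q̄ − (p·p̄)·v² + 2·(q·v·p̄ − p·v·q̄)), where all factors on the right are real numbers (here v² is the real number −|v|² and q·v·p̄ − p·v·q̄ is real). -/
/-! The Study condition says `q p̄ = -p q̄`, so `w = p (v p̄ + 2 q̄)` and hence
`|w|² = |p|² |v p̄ + 2 q̄|²`. Expanding the second factor gives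
`|v|² |p|² + 4 |q|² + 4 Re (q v p̄)`, and since `v̄ = -v`, the quaternion
`q v p̄ - p v q̄` is `q v p̄` plus its conjugate, i.e. the real number `2 Re (q v p̄)`. -/

namespace Quaternion

variable {R : Type*} [CommRing R] {p q v : ℍ[R]}

theorem re_mul_comm (a b : ℍ[R]) : (a * b).re = (b * a).re := by
  simp only [re_mul]
  ring

theorem star_eq_neg_of_re_eq_zero (hv : v.re = 0) : star v = -v := by
  ext <;> simp [hv]

theorem mul_mul_star_sub_mul_mul_star_of_re_eq_zero (p q : ℍ[R]) (hv : v.re = 0) :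
    q * v * star p - p * v * star q = ((2 * (q * v * star p).re : R) : ℍ[R]) := by
  have hstar : star (q * v * star p) = -(p * v * star q) := by
    rw [star_mul, star_mul, star_star, star_eq_neg_of_re_eq_zero hv]
    noncomm_ring
  rw [← self_add_star', hstar, sub_eq_add_neg]

theorem mul_mul_star_add_mul_star_sub_mul_star_of_study (v : ℍ[R])
    (hstudy : p * star q + q * star p = 0) :
    p * v * star p + p * star q - q * star p = p * (v * star p + 2 * star q) := by
  rw [eq_neg_of_add_eq_zero_right hstudy]
  noncomm_ring

theorem normSq_mul_star_add_two_star (p q v : ℍ[R]) :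
    normSq (v * star p + 2 * star q) =
      normSq v * normSq p + 4 * normSq q + 4 * (q * v * star p).re := by
  rw [normSq_add, map_mul, map_mul, normSq_star, normSq_star,
    show (2 : ℍ[R]) = ((2 : R) : ℍ[R]) from rfl, normSq_coe, star_mul,
    star_star, star_coe, ← mul_assoc, mul_coe_eq_smul, re_smul, smul_eq_mul,
    re_mul_comm (v * star p), mul_assoc q]
  ring

end Quaternion

open Quaternion

/-- For `p q̄ + q p̄ = 0`, `v` pure, and `w = p v p̄ + p q̄ − q p̄`, one has
`w w̄ = (p p̄)(4 q q̄ − (p p̄) v² + 2 (q v p̄ − p v q̄))`, where `v²` and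
`q v p̄ − p v q̄` are real numbers. -/
theorem orbit_on_moebius_quadric (p q v : Quaternion ℝ)
    (hstudy : p * star q + q * star p = 0) (hv : v.re = 0) :
    (p * v * star p + p * star q - q * star p) *
        star (p * v * star p + p * star q - q * star p) =
      (p * star p) * (4 * (q * star q) - (p * star p) * v ^ 2 +
        2 * (q * v * star p - p * v * star q)) ∧
    (∃ r : ℝ, v ^ 2 = (r : Quaternion ℝ)) ∧
    (∃ s : ℝ, q * v * star p - p * v * star q = (s : Quaternion ℝ)) := by
  have hsq : v ^ 2 = ((-normSq v : ℝ) : ℍ) := by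
    rw [coe_neg]
    exact sq_eq_neg_normSq.2 hv
  have hcross := mul_mul_star_sub_mul_mul_star_of_re_eq_zero p q hv
  refine ⟨?_, ⟨_, hsq⟩, ⟨_, hcross⟩⟩
  rw [mul_mul_star_add_mul_star_sub_mul_star_of_study v hstudy, self_mul_star, map_mul,
    normSq_mul_star_add_two_star, self_mul_star, self_mul_star, hsq, hcross]
  -- `norm_cast` does not see numerals of `ℍ` as casts, so they are made casts by hand.
  rw [show (4 : ℍ) = ((4 : ℝ) : ℍ) from rfl, show (2 : ℍ) = ((2 : ℝ) : ℍ) from rfl]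
  norm_cast
  congr 1
  ring
end

section
/- The Study kinematic map is a group action: for dual quaternions h₁ = p₁ + q₁ε and h₂ = p₂ + q₂ε with p₁·q̄₁ + q₁·p̄₁ = 0, p₂·q̄₂ + q₂·p̄₂ = 0, p₁·p̄₁ ≠ 0, p₂·p̄₂ ≠ 0, and for every pure quaternion v, one has φ(h₁h₂, v) = φ(h₁, φ(h₂, v)), where φ(p + qε, v) = (p·v·p̄ + p·q̄ − q·p̄)/(p·p̄). -/
/-!
With `h₁h₂ = p₁p₂ + (p₁q₂ + q₁p₂)ε`, the numerator `p v p̄ + p q̄ − q p̄` of `φ` for the product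
is `p₁ N₂ p̄₁ + |p₂|² (p₁ q̄₁ − q₁ p̄₁)`, where `N₂` is the numerator for `h₂`: expanding, every
term that is not of the form `p₁ (…) p̄₁` contains the central scalar `p₂ p̄₂ = |p₂|²`.
Dividing by `|p₁ p₂|² = |p₁|² |p₂|²` turns this into `φ(h₁, φ(h₂, v))`.
-/

open Quaternion

/-- The Study kinematic map `φ(p + qε, v) = (p v p̄ + p q̄ − q p̄)/(p p̄)`. -/
noncomputable def phi (p q v : Quaternion ℝ) : Quaternion ℝ :=
  (p * v * star p + p * star q - q * star p) / (p * star p)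

section CommRing

variable {R : Type*} [CommRing R]

theorem mul_self_mul_star_mul (a p b : ℍ[R]) : a * (p * star p) * b = normSq p • (a * b) := by
  rw [self_mul_star, mul_coe_eq_smul, smul_mul_assoc]

theorem study_numerator_mul (p₁ q₁ p₂ q₂ v : ℍ[R]) :
    p₁ * p₂ * v * star (p₁ * p₂) + p₁ * p₂ * star (p₁ * q₂ + q₁ * p₂)
        - (p₁ * q₂ + q₁ * p₂) * star (p₁ * p₂)
      = p₁ * (p₂ * v * star p₂ + p₂ * star q₂ - q₂ * star p₂) * star p₁
        + normSq p₂ • (p₁ * star q₁ - q₁ * star p₁) := by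
  rw [smul_sub, ← mul_self_mul_star_mul, ← mul_self_mul_star_mul]
  simp only [star_mul, star_add]
  noncomm_ring

end CommRing

theorem phi_eq_inv_normSq_smul (p q v : ℍ[ℝ]) :
    phi p q v = (normSq p)⁻¹ • (p * v * star p + p * star q - q * star p) := by
  rw [phi, self_mul_star, div_eq_mul_inv, ← coe_inv, mul_coe_eq_smul]

theorem study_map_group_action_general (p₁ q₁ p₂ q₂ v : Quaternion ℝ)
    (hp₂ : p₂ * star p₂ ≠ 0) :
    phi (p₁ * p₂) (p₁ * q₂ + q₁ * p₂) v = phi p₁ q₁ (phi p₂ q₂ v) := by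
  have hn₂ : normSq p₂ ≠ 0 := fun h => hp₂ (by rw [self_mul_star, h, coe_zero])
  rw [phi_eq_inv_normSq_smul, study_numerator_mul, map_mul, mul_inv, mul_smul,
    phi_eq_inv_normSq_smul, phi_eq_inv_normSq_smul, smul_add, smul_smul,
    inv_mul_cancel₀ hn₂, one_smul, mul_smul_comm, smul_mul_assoc, ← add_sub_assoc]

/-- The Study kinematic map is a group action: `φ(h₁h₂, v) = φ(h₁, φ(h₂, v))`,
where `h₁h₂ = p₁p₂ + (p₁q₂ + q₁p₂)ε`. -/
theorem study_map_group_action (p₁ q₁ p₂ q₂ v : Quaternion ℝ)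
    (h₁ : p₁ * star q₁ + q₁ * star p₁ = 0)
    (h₂ : p₂ * star q₂ + q₂ * star p₂ = 0)
    (hp₁ : p₁ * star p₁ ≠ 0) (hp₂ : p₂ * star p₂ ≠ 0)
    (hv : v.re = 0) :
    phi (p₁ * p₂) (p₁ * q₂ + q₁ * p₂) v = phi p₁ q₁ (phi p₂ q₂ v) :=
  study_map_group_action_general p₁ q₁ p₂ q₂ v hp₂
end

section
/- In the lattice L = ℤα₀ ⊕ ⋯ ⊕ ℤα₅ with α₀² = 1, αᵢ² = −1 for i ≥ 1, αᵢ·αⱼ = 0 for i ≠ j, suppose C₁, C₂, C₃, C₄ are four classes, each of the form α₀ − αᵢ or 2α₀ + αᵢ − α₁ − ⋯ − α₅ for some 1 ≤ i ≤ 5, with C₁ + C₂ + C₃ + C₄ = 6α₀ − 2α₁ − 2α₂ − 2α₃ − 2α₄ − 2α₅. Then exactly two of them are of the first form and two of the second form, and there exist indices k ≠ l in {1,2,3,4} with Cₖ·Cₗ = 2. -/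
/-! The `α₀`-coordinate of a conic class is `1` or `2` according to its form, and that of `−2κ`
is `6`, so four conics summing to `−2κ` comprise exactly two of each form.
For the second claim, intersect the relation `C₁ + C₂ + C₃ + C₄ = −2κ` with `C₁`: as `C₁² = 0` and
`C₁·(−κ) = 2`, the three numbers `C₁·Cₗ` (`l ≠ 1`) add up to `4`. Any two conic classes meet with
multiplicity at most `2`, so one of these numbers is `2`. -/

/-- The intersection form on the Picard lattice `ℤα₀ ⊕ ⋯ ⊕ ℤα₅`. -/
def B (x y : Fin 6 → ℤ) : ℤ :=
  x 0 * y 0 - (x 1 * y 1 + x 2 * y 2 + x 3 * y 3 + x 4 * y 4 + x 5 * y 5)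

/-- The basis vectors `α₀, …, α₅`. -/
def α (i : Fin 6) : Fin 6 → ℤ := Pi.single i 1

/-- Conic classes of the first form: `α₀ − αᵢ` for some `1 ≤ i ≤ 5`. -/
def FirstForm (C : Fin 6 → ℤ) : Prop := ∃ i : Fin 5, C = α 0 - α i.succ

/-- Conic classes of the second form: `2α₀ + αᵢ − α₁ − ⋯ − α₅`. -/
def SecondForm (C : Fin 6 → ℤ) : Prop :=
  ∃ i : Fin 5, C = (2 : ℤ) • α 0 + α i.succ - α 1 - α 2 - α 3 - α 4 - α 5

open Finset

def anticanonical : Fin 6 → ℤ := (3 : ℤ) • α 0 - α 1 - α 2 - α 3 - α 4 - α 5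

def IsConic (C : Fin 6 → ℤ) : Prop := FirstForm C ∨ SecondForm C

lemma B_add_right (x y z : Fin 6 → ℤ) : B x (y + z) = B x y + B x z := by
  simp only [B, Pi.add_apply]; ring

lemma B_smul_right (x y : Fin 6 → ℤ) (n : ℤ) : B x (n • y) = n * B x y := by
  simp only [B, Pi.smul_apply, smul_eq_mul]; ring

lemma B_sum_right {ι : Type*} (x : Fin 6 → ℤ) (s : Finset ι) (f : ι → Fin 6 → ℤ) :
    B x (∑ i ∈ s, f i) = ∑ i ∈ s, B x (f i) :=
  map_sum (AddMonoidHom.mk' (B x) (B_add_right x)) f s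

lemma FirstForm.apply_zero {C : Fin 6 → ℤ} (h : FirstForm C) : C 0 = 1 := by
  obtain ⟨i, rfl⟩ := h
  revert i; decide

lemma SecondForm.apply_zero {C : Fin 6 → ℤ} (h : SecondForm C) : C 0 = 2 := by
  obtain ⟨i, rfl⟩ := h
  revert i; decide

namespace IsConic

variable {C D : Fin 6 → ℤ}

lemma apply_zero_eq_one_or_two (hC : IsConic C) : C 0 = 1 ∨ C 0 = 2 :=
  hC.imp FirstForm.apply_zero SecondForm.apply_zero

lemma firstForm_iff_apply_zero_eq_one (hC : IsConic C) : FirstForm C ↔ C 0 = 1 :=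
  ⟨FirstForm.apply_zero, fun h => hC.resolve_right fun h₂ => by simp [h₂.apply_zero] at h⟩

lemma B_self (hC : IsConic C) : B C C = 0 := by
  rcases hC with ⟨i, rfl⟩ | ⟨i, rfl⟩ <;> revert i <;> decide

lemma B_anticanonical (hC : IsConic C) : B C anticanonical = 2 := by
  rcases hC with ⟨i, rfl⟩ | ⟨i, rfl⟩ <;> revert i <;> decide

lemma B_le_two (hC : IsConic C) (hD : IsConic D) : B C D ≤ 2 := by
  rcases hC with ⟨i, rfl⟩ | ⟨i, rfl⟩ <;> rcases hD with ⟨j, rfl⟩ | ⟨j, rfl⟩ <;>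
    revert i j <;> decide

end IsConic

lemma Finset.sum_eq_two_mul_card_sub_card_filter_eq_one {ι : Type*} [Fintype ι] (c : ι → ℤ)
    (hc : ∀ i, c i = 1 ∨ c i = 2) :
    ∑ i, c i = 2 * Fintype.card ι - #{i | c i = 1} := by
  have hsplit : ∀ i, c i = 2 - if c i = 1 then 1 else 0 := fun i => by
    rcases hc i with h | h <;> simp [h]
  rw [sum_congr rfl fun i _ => hsplit i, sum_sub_distrib, sum_boole]
  simp [mul_comm]

lemma Finset.exists_ne_of_card_filter_eq_two {ι : Type*} [Fintype ι] [DecidableEq ι]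
    {p : ι → Prop} [DecidablePred p] (h : #{i | p i} = 2) :
    ∃ k l, k ≠ l ∧ p k ∧ p l ∧ ∀ m, m ≠ k → m ≠ l → ¬ p m := by
  obtain ⟨k, l, hkl, hs⟩ := card_eq_two.mp h
  have hmem : ∀ m, p m ↔ m = k ∨ m = l := fun m => by
    simpa using congrArg (m ∈ ·) hs
  exact ⟨k, l, hkl, (hmem k).2 (.inl rfl), (hmem l).2 (.inr rfl),
    fun m hk hl hm => ((hmem m).1 hm).elim hk hl⟩

variable {ι : Type*} [Fintype ι] {C : ι → Fin 6 → ℤ}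

open scoped Classical in
lemma card_filter_firstForm_add_six (hC : ∀ k, IsConic (C k))
    (hsum : ∑ k, C k = (2 : ℤ) • anticanonical) :
    (#{k | FirstForm (C k)} : ℤ) + 6 = 2 * Fintype.card ι := by
  have h0 : ∑ k, C k 0 = 6 := by
    simpa [Finset.sum_apply, anticanonical, α] using congrFun hsum 0
  have hcount := Finset.sum_eq_two_mul_card_sub_card_filter_eq_one (fun k => C k 0)
    fun k => (hC k).apply_zero_eq_one_or_two
  simp only [← fun k => (hC k).firstForm_iff_apply_zero_eq_one] at hcount
  omega

lemma exists_B_eq_two (hcard : Fintype.card ι ≤ 4) (hC : ∀ k, IsConic (C k))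
    (hsum : ∑ k, C k = (2 : ℤ) • anticanonical) (k : ι) : ∃ l ≠ k, B (C k) (C l) = 2 := by
  classical
  have hrest : ∑ l ∈ univ.erase k, B (C k) (C l) = 4 := by
    have h := congrArg (B (C k)) hsum
    rw [B_sum_right, B_smul_right, (hC k).B_anticanonical, ← add_sum_erase _ _ (mem_univ k),
      (hC k).B_self, zero_add] at h
    exact h
  by_contra! hne
  have hle : ∀ l ∈ univ.erase k, B (C k) (C l) ≤ 1 := fun l hl =>
    Int.le_of_lt_add_one (lt_of_le_of_ne ((hC k).B_le_two (hC l)) (hne l (ne_of_mem_erase hl)))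
  have hbound := sum_le_card_nsmul _ _ _ hle
  rw [card_erase_of_mem (mem_univ k), card_univ, nsmul_one] at hbound
  omega

/-- If four conic classes sum to `−2κ = 6α₀ − 2α₁ − ⋯ − 2α₅`, then exactly two
are of each form, and two of them intersect with multiplicity `2`. -/
theorem four_conics_cospherical (C : Fin 4 → (Fin 6 → ℤ))
    (hconic : ∀ k, FirstForm (C k) ∨ SecondForm (C k))
    (hsum : C 0 + C 1 + C 2 + C 3 =
      (6 : ℤ) • α 0 - (2 : ℤ) • α 1 - (2 : ℤ) • α 2 - (2 : ℤ) • α 3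
        - (2 : ℤ) • α 4 - (2 : ℤ) • α 5) :
    (∃ k l : Fin 4, k ≠ l ∧ FirstForm (C k) ∧ FirstForm (C l) ∧
      ∀ m : Fin 4, m ≠ k → m ≠ l → SecondForm (C m)) ∧
    ∃ k l : Fin 4, k ≠ l ∧ B (C k) (C l) = 2 := by
  have hC : ∀ k, IsConic (C k) := hconic
  have hsum' : ∑ k, C k = (2 : ℤ) • anticanonical := by
    rw [Fin.sum_univ_four, hsum]
    decide
  refine ⟨?_, ?_⟩
  · classical
    have hcard := card_filter_firstForm_add_six hC hsum'
    rw [Fintype.card_fin] at hcard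
    obtain ⟨k, l, hkl, hk, hl, hm⟩ := Finset.exists_ne_of_card_filter_eq_two
      (p := fun k => FirstForm (C k)) (by omega)
    exact ⟨k, l, hkl, hk, hl, fun m hmk hml => (hC m).resolve_left (hm m hmk hml)⟩
  · obtain ⟨l, hl, h⟩ := exists_B_eq_two (by simp) hC hsum' 0
    exact ⟨0, l, hl.symm, h⟩
end

section
/- Let p, q be quaternions with p·q̄ + q·p̄ = 0 and p·p̄ ≠ 0, let v be a pure quaternion, and write w = p·v·p̄ + p·q̄ − q·p̄ = w₁i + w₂j + w₃k. Then the point (p·p̄ : w₁ : w₂ : w₃ : 4q·q̄ − (p·p̄)v² + 2(q·v·p̄ − p·v·q̄)) is a well-defined point of P⁴(ℝ) (not all coordinates vanish) lying on the Möbius quadric x₀x₄ = x₁² + x₂² + x₃². -/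
/-!
Under the Study condition `q p̄ = -p q̄`, so `w = p (v p̄ + 2 q̄)`, and `w` is pure because
`re (p v p̄) = |p|² re v` while `p q̄ - q p̄` is minus its own conjugate. As `v̄ = -v`, the last
coordinate equals `|v p̄ + 2 q̄|² = |2 q - p v|²`, so multiplicativity of the norm gives
`x₀ x₄ = |p|² |v p̄ + 2 q̄|² = |w|² = w₁² + w₂² + w₃²`; the point is nonzero since `x₀ = |p|² ≠ 0`.
-/

namespace Quaternion

variable {R : Type*} [CommRing R]

theorem re_mul_mul_star (p v : ℍ[R]) : (p * v * star p).re = normSq p * v.re := by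
  simp only [normSq_def', re_mul, imI_mul, imJ_mul, imK_mul, re_star, imI_star, imJ_star,
    imK_star]
  ring

theorem re_mul_star_sub_mul_star (a b : ℍ[R]) : (a * star b - b * star a).re = 0 := by
  rw [← star_mul_star, re_sub, re_star, sub_self]

theorem normSq_eq_of_re_eq_zero {a : ℍ[R]} (ha : a.re = 0) :
    normSq a = a.imI ^ 2 + a.imJ ^ 2 + a.imK ^ 2 := by
  rw [normSq_def', ha]
  ring

theorem mul_mul_star_add_mul_star_sub_mul_star {p q : ℍ[R]} (v : ℍ[R])
    (hstudy : p * star q + q * star p = 0) :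
    p * v * star p + p * star q - q * star p = p * (v * star p + 2 * star q) := by
  rw [eq_neg_of_add_eq_zero_right hstudy]
  noncomm_ring

theorem normSq_mul_star_add_two_mul_star (p q : ℍ[R]) {v : ℍ[R]} (hv : v.re = 0) :
    normSq (v * star p + 2 * star q) =
      (4 * (q * star q) - p * star p * v ^ 2 + 2 * (q * v * star p - p * v * star q)).re := by
  have hv' : star v = -v := by ext <;> simp [hv]
  have hsq : v ^ 2 = -((normSq v : R) : ℍ[R]) := by
    rw [sq, ← Quaternion.star_mul_self, hv', neg_mul, neg_neg]
  have hpvq : p * v * star q = -star (q * v * star p) := by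
    simp only [star_mul, star_star, hv', mul_neg, neg_mul, neg_neg, mul_assoc]
  have h2 : (2 : ℍ[R]) = ((2 : R) : ℍ[R]) := rfl
  have h4 : (4 : ℍ[R]) = ((4 : R) : ℍ[R]) := rfl
  rw [h2, h4]
  calc normSq (v * star p + ((2 : R) : ℍ[R]) * star q)
        = normSq (star (((2 : R) : ℍ[R]) * q - p * v)) := by
        rw [star_sub, star_mul, star_mul, star_coe, hv', ← coe_commutes, neg_mul, sub_neg_eq_add,
          add_comm]
    _ = 4 * normSq q + normSq p * normSq v + 4 * (q * v * star p).re := by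
        rw [normSq_star, sub_eq_add_neg, normSq_add, normSq_neg, map_mul, map_mul, normSq_coe,
          star_neg, star_mul, hv', neg_mul, neg_neg, mul_assoc, coe_mul_eq_smul, re_smul,
          smul_eq_mul, ← mul_assoc q]
        ring
    _ = _ := by
        rw [Quaternion.self_mul_star, Quaternion.self_mul_star, hsq, hpvq, mul_neg, ← coe_mul,
          sub_neg_eq_add, sub_neg_eq_add, ← coe_mul, ← coe_add]
        simp only [coe_mul_eq_smul, re_add, re_smul, re_coe, re_star, smul_eq_mul]
        ring

end Quaternion

/-- For `p q̄ + q p̄ = 0`, `p p̄ ≠ 0`, `v` pure and `w = p v p̄ + p q̄ − q p̄ =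
w₁i + w₂j + w₃k`, the tuple
`(p p̄ : w₁ : w₂ : w₃ : 4 q q̄ − (p p̄)v² + 2(q v p̄ − p v q̄))` is a well-defined
point of `P⁴(ℝ)` lying on the Möbius quadric `x₀x₄ = x₁² + x₂² + x₃²`. -/
theorem orbit_point_on_moebius_quadric (p q v : Quaternion ℝ)
    (hstudy : p * star q + q * star p = 0)
    (hp : p * star p ≠ 0) (hv : v.re = 0) :
    (![(p * star p).re,
        (p * v * star p + p * star q - q * star p).imI,
        (p * v * star p + p * star q - q * star p).imJ,
        (p * v * star p + p * star q - q * star p).imK,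
        (4 * (q * star q) - (p * star p) * v ^ 2 +
          2 * (q * v * star p - p * v * star q)).re] : Fin 5 → ℝ) ≠ 0 ∧
    (p * star p).re *
        (4 * (q * star q) - (p * star p) * v ^ 2 +
          2 * (q * v * star p - p * v * star q)).re =
      (p * v * star p + p * star q - q * star p).imI ^ 2 +
        (p * v * star p + p * star q - q * star p).imJ ^ 2 +
        (p * v * star p + p * star q - q * star p).imK ^ 2 := by
  have hre : (p * star p).re ≠ 0 := fun h =>
    hp (by rw [Quaternion.mul_star_eq_coe, h, Quaternion.coe_zero])
  have hw : (p * v * star p + p * star q - q * star p).re = 0 := by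
    rw [add_sub_assoc, Quaternion.re_add, Quaternion.re_mul_mul_star, hv, mul_zero, zero_add,
      Quaternion.re_mul_star_sub_mul_star]
  refine ⟨fun h => hre (congrFun h 0), ?_⟩
  rw [← Quaternion.normSq_eq_of_re_eq_zero hw,
    Quaternion.mul_mul_star_add_mul_star_sub_mul_star v hstudy, map_mul,
    Quaternion.normSq_mul_star_add_two_mul_star p q hv, Quaternion.normSq_def]
end
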